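/- Let f : ℝ^d → ℝ be differentiable with L-Lipschitz gradient, h : ℝ^d → ℝ proper closed convex, Ψ = f + h, and η > 0. For any x, g ∈ ℝ^d, let y = prox_{ηh}(x − ηg). Then for all z ∈ ℝ^d: Ψ(y) ≤ Ψ(z) + ⟨y − z, ∇f(x) − g⟩ + (L/2 − 1/(2η))‖y − x‖² + (L/2 + 1/(2η))‖z − x‖² − (1/(2η))‖y − z‖². -/

import Mathlib

/-!
The descent lemma bounds `f y` from above and `f z` from below by their linearizations at `x`,
up to `(L/2)‖· - x‖²`. With `u = x - ηg`, the prox objective `w ↦ h w + ‖w - u‖² / (2η)` is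
`1/η`-strongly convex, so its minimizer `y` satisfies the three-point inequality
`h y + ‖y - u‖²/(2η) + ‖y - z‖²/(2η) ≤ h z + ‖z - u‖²/(2η)`.
Adding the three bounds and expanding the squares around `x` gives the claim.
-/

open scoped RealInnerProductSpace
open Set Filter Topology

theorem norm_sub_sub_fderiv_le_of_lipschitz_fderiv {E F : Type*}
    [NormedAddCommGroup E] [NormedSpace ℝ E] [NormedAddCommGroup F] [NormedSpace ℝ F]
    {f : E → F} {L : ℝ} (hf : Differentiable ℝ f)
    (hL : ∀ u v, ‖fderiv ℝ f u - fderiv ℝ f v‖ ≤ L * ‖u - v‖) (a b : E) :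
    ‖f b - f a - fderiv ℝ f a (b - a)‖ ≤ L / 2 * ‖b - a‖ ^ 2 := by
  set v := b - a
  have hderiv (t : ℝ) : HasDerivAt (fun s : ℝ => f (a + s • v) - f a - s • fderiv ℝ f a v)
      (fderiv ℝ f (a + t • v) v - fderiv ℝ f a v) t := by
    have hline : HasDerivAt (fun s : ℝ => a + s • v) v t := by
      simpa using ((hasDerivAt_id t).smul_const v).const_add a
    exact ((((hf _).hasFDerivAt.comp_hasDerivAt t hline).sub_const (f a)).sub
      ((hasDerivAt_id t).smul_const (fderiv ℝ f a v))).congr_deriv (by simp)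
  have hbound (t : ℝ) (ht : t ∈ Ico (0 : ℝ) 1) :
      ‖fderiv ℝ f (a + t • v) v - fderiv ℝ f a v‖ ≤ L * t * ‖v‖ ^ 2 :=
    calc ‖fderiv ℝ f (a + t • v) v - fderiv ℝ f a v‖
        = ‖(fderiv ℝ f (a + t • v) - fderiv ℝ f a) v‖ := rfl
      _ ≤ ‖fderiv ℝ f (a + t • v) - fderiv ℝ f a‖ * ‖v‖ := ContinuousLinearMap.le_opNorm _ _
      _ ≤ L * ‖t • v‖ * ‖v‖ := by gcongr; simpa using hL (a + t • v) a
      _ = L * t * ‖v‖ ^ 2 := by rw [norm_smul, Real.norm_of_nonneg ht.1]; ring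
  have := image_norm_le_of_norm_deriv_right_le_deriv_boundary
    (fun t _ => (hderiv t).continuousAt.continuousWithinAt)
    (fun t _ => (hderiv t).hasDerivWithinAt)
    (B := fun t => L / 2 * t ^ 2 * ‖v‖ ^ 2) (by simp)
    (fun t => (((hasDerivAt_pow 2 t).const_mul (L / 2)).mul_const (‖v‖ ^ 2)).congr_deriv
      (by ring))
    hbound (right_mem_Icc.2 zero_le_one)
  simpa [v] using this

section InnerProductSpace

variable {E : Type*} [NormedAddCommGroup E] [InnerProductSpace ℝ E]

theorem norm_fderiv_sub_fderiv_eq_norm_gradient_sub [CompleteSpace E] (f : E → ℝ) (u v : E) :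
    ‖fderiv ℝ f u - fderiv ℝ f v‖ = ‖gradient f u - gradient f v‖ := by
  rw [← (InnerProductSpace.toDual ℝ E).norm_map, map_sub]
  simp [gradient]

theorem abs_sub_sub_inner_gradient_le_of_lipschitz_gradient [CompleteSpace E] {f : E → ℝ}
    {L : ℝ} (hf : Differentiable ℝ f)
    (hL : ∀ u v, ‖gradient f u - gradient f v‖ ≤ L * ‖u - v‖) (a b : E) :
    |f b - f a - ⟪gradient f a, b - a⟫| ≤ L / 2 * ‖b - a‖ ^ 2 := by
  have h := norm_sub_sub_fderiv_le_of_lipschitz_fderiv hf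
    (fun u v => (norm_fderiv_sub_fderiv_eq_norm_gradient_sub f u v).trans_le (hL u v)) a b
  simpa [gradient, InnerProductSpace.toDual_symm_apply] using h

theorem strongConvexOn_mul_norm_sub_sq (c : ℝ) (u : E) :
    StrongConvexOn univ (2 * c) fun w => c * ‖w - u‖ ^ 2 := by
  rw [strongConvexOn_iff_convex]
  refine (((-(2 * c) • innerSL ℝ u).toLinearMap.convexOn convex_univ).add_const
    (c * ‖u‖ ^ 2)).congr fun w _ => ?_
  change -(2 * c) * ⟪u, w⟫ + c * ‖u‖ ^ 2 = c * ‖w - u‖ ^ 2 - 2 * c / 2 * ‖w‖ ^ 2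
  rw [norm_sub_sq_real, real_inner_comm]
  ring

theorem ConvexOn.add_strongConvexOn {s : Set E} {m : ℝ} {ψ φ : E → ℝ}
    (hψ : ConvexOn ℝ s ψ) (hφ : StrongConvexOn s m φ) : StrongConvexOn s m (ψ + φ) := by
  simpa [StrongConvexOn] using (uniformConvexOn_zero.2 hψ).add hφ

theorem StrongConvexOn.add_mul_norm_sub_sq_le_of_isMinOn {s : Set E} {m : ℝ} {φ : E → ℝ}
    (hφ : StrongConvexOn s m φ) {y z : E} (hy : y ∈ s) (hz : z ∈ s) (hmin : IsMinOn φ s y) :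
    φ y + m / 2 * ‖y - z‖ ^ 2 ≤ φ z := by
  have hseg (t : ℝ) (ht : t ∈ Ioo (0 : ℝ) 1) :
      φ y ≤ φ z - (1 - t) * (m / 2 * ‖y - z‖ ^ 2) := by
    have hconv := hφ.2 hy hz (sub_nonneg.2 ht.2.le) ht.1.le (sub_add_cancel 1 t)
    have hle := hmin (hφ.1 hy hz (sub_nonneg.2 ht.2.le) ht.1.le (sub_add_cancel 1 t))
    simp only [smul_eq_mul, mem_ofPred_eq] at hconv hle
    have key : t * φ y ≤ t * (φ z - (1 - t) * (m / 2 * ‖y - z‖ ^ 2)) := by linarith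
    exact le_of_mul_le_mul_left key ht.1
  have hlim : Tendsto (fun t : ℝ => φ z - (1 - t) * (m / 2 * ‖y - z‖ ^ 2)) (𝓝[>] 0)
      (𝓝 (φ z - (1 - 0) * (m / 2 * ‖y - z‖ ^ 2))) :=
    ((continuous_const.sub ((continuous_const.sub continuous_id).mul continuous_const)).tendsto
      0).mono_left nhdsWithin_le_nhds
  have := ge_of_tendsto hlim (mem_of_superset (Ioo_mem_nhdsGT zero_lt_one) hseg)
  linarith

theorem one_div_two_mul_norm_sub_sub_smul_sq {η : ℝ} (hη : η ≠ 0) (w x g : E) :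
    1 / (2 * η) * ‖w - (x - η • g)‖ ^ 2
      = 1 / (2 * η) * ‖w - x‖ ^ 2 + ⟪w - x, g⟫ + η / 2 * ‖g‖ ^ 2 := by
  rw [show w - (x - η • g) = (w - x) + η • g by abel, norm_add_sq_real, real_inner_smul_right,
    norm_smul, Real.norm_eq_abs, mul_pow, sq_abs]
  field_simp

end InnerProductSpace

/-- key descent-type inequality for the prox step (Lemma 4 of the paper). -/
theorem stmt5 {d : ℕ} (f h : EuclideanSpace ℝ (Fin d) → ℝ) (L : ℝ)
    (hf : Differentiable ℝ f)
    (hLip : ∀ u v, ‖gradient f u - gradient f v‖ ≤ L * ‖u - v‖)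
    (hconv : ConvexOn ℝ Set.univ h) (η : ℝ) (hη : 0 < η)
    (x g y : EuclideanSpace ℝ (Fin d))
    (hy : ∀ w, h y + (1 / (2 * η)) * ‖y - (x - η • g)‖ ^ 2 ≤
               h w + (1 / (2 * η)) * ‖w - (x - η • g)‖ ^ 2) :
    ∀ z, (f y + h y) ≤ (f z + h z) + ⟪y - z, gradient f x - g⟫
          + (L / 2 - 1 / (2 * η)) * ‖y - x‖ ^ 2
          + (L / 2 + 1 / (2 * η)) * ‖z - x‖ ^ 2
          - (1 / (2 * η)) * ‖y - z‖ ^ 2 := by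
  intro z
  have hprox := (hconv.add_strongConvexOn (strongConvexOn_mul_norm_sub_sq (1 / (2 * η))
    (x - η • g))).add_mul_norm_sub_sq_le_of_isMinOn (mem_univ y) (mem_univ z) fun w _ => hy w
  simp only [Pi.add_apply, one_div_two_mul_norm_sub_sub_smul_sq hη.ne'] at hprox
  have hfy := (abs_le.1 (abs_sub_sub_inner_gradient_le_of_lipschitz_gradient hf hLip x y)).2
  have hfz := (abs_le.1 (abs_sub_sub_inner_gradient_le_of_lipschitz_gradient hf hLip x z)).1
  have hinner : ⟪y - z, gradient f x - g⟫
      = ⟪gradient f x, y - x⟫ - ⟪gradient f x, z - x⟫ - (⟪y - x, g⟫ - ⟪z - x, g⟫) := by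
    simp only [inner_sub_left, inner_sub_right, real_inner_comm]
    ring
  linarith
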